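/- (Rule of Trace-3 Matrices) Let A and B be the z-matrix and w-matrix of a singular sequence. Assume the trace of A equals 3 and a_{ii} = a_{jj} = a_{kk} = 1 for distinct indices i, j, k. If l ∉ {i, j, k} and a_{ij} = a_{ik} = a_{il} = 1, then a_{jl} + a_{kl} ≠ 0. The same statement holds with A replaced by B. -/

import Mathlib

/-!
Let `ζ_{kl}` and `x_k` be the limits of `ε² Z_{kl}` and `ε² z_k`. The normalization
`δ² z_{kl} w_{kl} = 1` gives `‖ε² Z_{kl}‖² ‖ε² z_{kl}‖ (‖w_{kl}‖ / ε²)³ = 1`, so the scaled gap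
`‖w_{kl}‖ / ε²` stays bounded exactly when `ζ_{kl} ≠ 0` and `x_k ≠ x_l`. The trace condition
makes `x_l = 0`; if `a_{jl} = a_{kl} = 0`, the triangle inequality for these gaps then forces
`x_j = x_i = x_k`. Summing `m_p z_p = ∑_q m_p m_q Z_{qp}` over all `p`, the `Z`-terms cancel by
antisymmetry, so `∑_p m_p x_p = 0`; as only `x_i, x_j, x_k` are nonzero, this reads
`(m_i + m_j + m_k) x_i = 0` with `x_i ≠ 0`. Exchanging `z` and `w` turns the claim for `B` into
the claim for `A`.
-/

open Filter Finset

/-- `Zq δ z k l` is the quantity `Z_{lk} = δ_{kl}^3 · (z_k − z_l)`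
(and, applied to `w`, the quantity `W_{lk}`). -/
noncomputable def Zq {n : ℕ} (δ : Fin n → Fin n → ℂ) (z : Fin n → ℂ) (k l : Fin n) : ℂ :=
  δ k l ^ 3 * (z k - z l)

/-- A singular sequence of normalized central configurations for the masses `m`:
sequences `z^{(N)}, w^{(N)} ∈ ℂ^n`, symmetric `δ^{(N)}`, and positive reals `ε_N → 0`
such that every term satisfies the central configuration equations
`z_k = ∑_{l≠k} m_l Z_{lk}`, `w_k = ∑_{l≠k} m_l W_{lk}`, the normalization
`δ_{kl}^2 z_{kl} w_{kl} = 1` (`k ≠ l`), the maximum of the `|z_k|, |Z_{kl}|`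
(resp. `|w_k|, |W_{kl}|`) equals `ε_N^{-2}`, and all the sequences
`ε_N^2 z_k, ε_N^2 w_k, ε_N^2 Z_{kl}, ε_N^2 W_{kl}` converge. -/
structure SingularSeq (n : ℕ) (m : Fin n → ℂ) : Type where
  z : ℕ → Fin n → ℂ
  w : ℕ → Fin n → ℂ
  delta : ℕ → Fin n → Fin n → ℂ
  eps : ℕ → ℝ
  eps_pos : ∀ N, 0 < eps N
  eps_lim : Tendsto eps atTop (nhds 0)
  delta_symm : ∀ N, ∀ k l : Fin n, delta N k l = delta N l k
  eq_z : ∀ N, ∀ k : Fin n, z N k = ∑ l ∈ univ.erase k, m l * Zq (delta N) (z N) k l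
  eq_w : ∀ N, ∀ k : Fin n, w N k = ∑ l ∈ univ.erase k, m l * Zq (delta N) (w N) k l
  normalize : ∀ N, ∀ k l : Fin n, k ≠ l →
    delta N k l ^ 2 * (z N l - z N k) * (w N l - w N k) = 1
  maxZ : ∀ N, IsGreatest
      ({x : ℝ | ∃ k, x = ‖z N k‖} ∪
        {x : ℝ | ∃ k l, k ≠ l ∧ x = ‖Zq (delta N) (z N) k l‖})
      (eps N ^ (-2 : ℤ))
  maxW : ∀ N, IsGreatest
      ({x : ℝ | ∃ k, x = ‖w N k‖} ∪
        {x : ℝ | ∃ k l, k ≠ l ∧ x = ‖Zq (delta N) (w N) k l‖})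
      (eps N ^ (-2 : ℤ))
  conv_z : ∀ k : Fin n, ∃ L : ℂ,
    Tendsto (fun N => (eps N : ℂ) ^ 2 * z N k) atTop (nhds L)
  conv_w : ∀ k : Fin n, ∃ L : ℂ,
    Tendsto (fun N => (eps N : ℂ) ^ 2 * w N k) atTop (nhds L)
  conv_Z : ∀ k l : Fin n, k ≠ l → ∃ L : ℂ,
    Tendsto (fun N => (eps N : ℂ) ^ 2 * Zq (delta N) (z N) k l) atTop (nhds L)
  conv_W : ∀ k l : Fin n, k ≠ l → ∃ L : ℂ,
    Tendsto (fun N => (eps N : ℂ) ^ 2 * Zq (delta N) (w N) k l) atTop (nhds L)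

/-- `A` and `B` are the z-matrix and the w-matrix of the singular sequence `S`:
symmetric `{0,1}`-matrices whose entries record which of the (convergent) sequences
`ε_N^2 z_i`, `ε_N^2 Z_{ij}` (resp. `ε_N^2 w_i`, `ε_N^2 W_{ij}`) have nonzero limit. -/
structure IsZWMatrices {n : ℕ} {m : Fin n → ℂ} (S : SingularSeq n m)
    (A B : Matrix (Fin n) (Fin n) ℕ) : Prop where
  zeroOne_A : ∀ i j, A i j = 0 ∨ A i j = 1
  symm_A : ∀ i j, A i j = A j i
  zeroOne_B : ∀ i j, B i j = 0 ∨ B i j = 1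
  symm_B : ∀ i j, B i j = B j i
  diag_A : ∀ i, A i i = 1 ↔
    ¬ Tendsto (fun N => (S.eps N : ℂ) ^ 2 * S.z N i) atTop (nhds 0)
  off_A : ∀ i j, i ≠ j → (A i j = 1 ↔
    ¬ Tendsto (fun N => (S.eps N : ℂ) ^ 2 * Zq (S.delta N) (S.z N) i j) atTop (nhds 0))
  diag_B : ∀ i, B i i = 1 ↔
    ¬ Tendsto (fun N => (S.eps N : ℂ) ^ 2 * S.w N i) atTop (nhds 0)
  off_B : ∀ i j, i ≠ j → (B i j = 1 ↔
    ¬ Tendsto (fun N => (S.eps N : ℂ) ^ 2 * Zq (S.delta N) (S.w N) i j) atTop (nhds 0))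

theorem Finset.sum_sum_eq_zero_of_antisymm {ι M : Type*} [AddCommGroup M] [IsAddTorsionFree M]
    (s : Finset ι) {f : ι → ι → M} (hf : ∀ p q, f q p = -f p q) :
    ∑ p ∈ s, ∑ q ∈ s, f p q = 0 := by
  refine self_eq_neg.mp ?_
  calc ∑ p ∈ s, ∑ q ∈ s, f p q = ∑ q ∈ s, ∑ p ∈ s, f p q := Finset.sum_comm
    _ = -∑ p ∈ s, ∑ q ∈ s, f p q := by
      simp only [← Finset.sum_neg_distrib]
      exact Finset.sum_congr rfl fun q _ => Finset.sum_congr rfl fun p _ => hf q p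

theorem Finset.eq_zero_of_sum_eq_sum_univ {ι : Type*} [Fintype ι] {f : ι → ℕ} {s : Finset ι}
    (h : ∑ p ∈ s, f p = ∑ p, f p) {p : ι} (hp : p ∉ s) : f p = 0 := by
  classical
  have hrest : ∑ q ∈ univ \ s, f q = 0 := by
    have := Finset.sum_sdiff (f := f) (subset_univ s)
    omega
  exact Finset.sum_eq_zero_iff.mp hrest p (by simpa using hp)

theorem isBoundedUnder_le_iff_ne_zero_of_mul_pow_three_eq_one {ι : Type*} {l : Filter ι}
    [l.NeBot] {c s : ι → ℝ} {c₀ : ℝ} (h : ∀ x, c x * s x ^ 3 = 1) (hs : ∀ x, 0 ≤ s x)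
    (hc : Tendsto c l (nhds c₀)) : IsBoundedUnder (· ≤ ·) l s ↔ c₀ ≠ 0 := by
  constructor
  · -- Where `s ≤ C`, `c = s⁻³ ≥ C⁻³`, so `c` cannot tend to `0`.
    rintro ⟨C, hC⟩ rfl
    have hsmall : ∀ᶠ x in l, c x * C ^ 3 < 1 :=
      (hc.mul_const (C ^ 3)).eventually (gt_mem_nhds (by simp))
    obtain ⟨x, hxC, hx⟩ := ((eventually_map.mp hC).and hsmall).exists
    have hcx : 0 ≤ c x := by
      by_contra! hneg
      nlinarith [h x, pow_nonneg (hs x) 3]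
    nlinarith [h x, pow_le_pow_left₀ (hs x) hxC 3]
  · intro hc₀
    have hcube : Tendsto (fun x => s x ^ 3) l (nhds c₀⁻¹) :=
      (hc.inv₀ hc₀).congr fun x => (eq_inv_of_mul_eq_one_right (h x)).symm
    obtain ⟨B, hB⟩ := hcube.isBoundedUnder_le
    refine ⟨1 + B, eventually_map.mpr ((eventually_map.mp hB).mono fun x hx => ?_)⟩
    nlinarith [hs x, sq_nonneg (s x - 1), sq_nonneg (s x)]

namespace SingularSeq

variable {n : ℕ} {m : Fin n → ℂ} (S : SingularSeq n m)

noncomputable def zlim (k : Fin n) : ℂ :=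
  limUnder atTop fun N => (S.eps N : ℂ) ^ 2 * S.z N k

noncomputable def Zlim (k l : Fin n) : ℂ :=
  limUnder atTop fun N => (S.eps N : ℂ) ^ 2 * Zq (S.delta N) (S.z N) k l

noncomputable def wGap (N : ℕ) (k l : Fin n) : ℝ :=
  ‖S.w N k - S.w N l‖ / S.eps N ^ 2

theorem tendsto_zlim (k : Fin n) :
    Tendsto (fun N => (S.eps N : ℂ) ^ 2 * S.z N k) atTop (nhds (S.zlim k)) :=
  tendsto_nhds_limUnder (S.conv_z k)

theorem tendsto_Zlim (k l : Fin n) :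
    Tendsto (fun N => (S.eps N : ℂ) ^ 2 * Zq (S.delta N) (S.z N) k l) atTop
      (nhds (S.Zlim k l)) := by
  refine tendsto_nhds_limUnder ?_
  obtain rfl | hkl := eq_or_ne k l
  · exact ⟨0, by simp [Zq]⟩
  · exact S.conv_Z k l hkl

theorem tendsto_zero_iff_zlim_eq_zero (k : Fin n) :
    Tendsto (fun N => (S.eps N : ℂ) ^ 2 * S.z N k) atTop (nhds 0) ↔ S.zlim k = 0 :=
  ⟨tendsto_nhds_unique (S.tendsto_zlim k), fun h => h ▸ S.tendsto_zlim k⟩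

theorem tendsto_zero_iff_Zlim_eq_zero (k l : Fin n) :
    Tendsto (fun N => (S.eps N : ℂ) ^ 2 * Zq (S.delta N) (S.z N) k l) atTop (nhds 0) ↔
      S.Zlim k l = 0 :=
  ⟨tendsto_nhds_unique (S.tendsto_Zlim k l), fun h => h ▸ S.tendsto_Zlim k l⟩

theorem Zq_sq_mul_sub_mul_sub_pow_three (N : ℕ) {k l : Fin n} (hkl : k ≠ l) :
    Zq (S.delta N) (S.z N) k l ^ 2 * (S.z N k - S.z N l) * (S.w N k - S.w N l) ^ 3 = 1 := by
  have h := S.normalize N k l hkl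
  calc _ = (S.delta N k l ^ 2 * (S.z N l - S.z N k) * (S.w N l - S.w N k)) ^ 3 := by
          unfold Zq; ring
    _ = 1 := by rw [h, one_pow]

theorem wGap_le_add (N : ℕ) (i k l : Fin n) : S.wGap N k l ≤ S.wGap N i k + S.wGap N i l := by
  unfold wGap
  rw [← add_div, norm_sub_rev (S.w N i)]
  gcongr
  exact norm_sub_le_norm_sub_add_norm_sub _ _ _

theorem norm_mul_norm_mul_wGap_pow_three (N : ℕ) {k l : Fin n} (hkl : k ≠ l) :
    ‖(S.eps N : ℂ) ^ 2 * Zq (S.delta N) (S.z N) k l‖ ^ 2 *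
      ‖(S.eps N : ℂ) ^ 2 * S.z N k - (S.eps N : ℂ) ^ 2 * S.z N l‖ * S.wGap N k l ^ 3 = 1 := by
  have h := congrArg (‖·‖) (S.Zq_sq_mul_sub_mul_sub_pow_three N hkl)
  simp only [norm_mul, norm_pow, norm_one] at h
  have hε := (S.eps_pos N).ne'
  rw [wGap, ← mul_sub, norm_mul, norm_mul, norm_pow, Complex.norm_real,
    Real.norm_of_nonneg (S.eps_pos N).le]
  field_simp
  exact h

theorem isBoundedUnder_wGap_iff {k l : Fin n} (hkl : k ≠ l) :
    IsBoundedUnder (· ≤ ·) atTop (fun N => S.wGap N k l) ↔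
      S.Zlim k l ≠ 0 ∧ S.zlim k ≠ S.zlim l := by
  have hc : Tendsto (fun N => ‖(S.eps N : ℂ) ^ 2 * Zq (S.delta N) (S.z N) k l‖ ^ 2 *
      ‖(S.eps N : ℂ) ^ 2 * S.z N k - (S.eps N : ℂ) ^ 2 * S.z N l‖) atTop
      (nhds (‖S.Zlim k l‖ ^ 2 * ‖S.zlim k - S.zlim l‖)) :=
    ((S.tendsto_Zlim k l).norm.pow 2).mul ((S.tendsto_zlim k).sub (S.tendsto_zlim l)).norm
  rw [isBoundedUnder_le_iff_ne_zero_of_mul_pow_three_eq_one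
    (S.norm_mul_norm_mul_wGap_pow_three · hkl) (fun N => by unfold wGap; positivity) hc]
  simp [sub_eq_zero]

/-- Otherwise the `w`-gaps of `(i, l)` and `(i, p)` stay bounded while that of `(p, l)` does
not, against the triangle inequality. -/
theorem zlim_eq_of_Zlim_eq_zero {i p l : Fin n} (hil : S.Zlim i l ≠ 0) (hi : S.zlim i ≠ S.zlim l)
    (hpl : S.Zlim p l = 0) (hp : S.zlim p ≠ S.zlim l) (hip : S.Zlim i p ≠ 0) :
    S.zlim i = S.zlim p := by
  by_contra hne
  have hbdd_il := (S.isBoundedUnder_wGap_iff (ne_of_apply_ne S.zlim hi)).mpr ⟨hil, hi⟩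
  have hbdd_ip := (S.isBoundedUnder_wGap_iff (ne_of_apply_ne S.zlim hne)).mpr ⟨hip, hne⟩
  refine ((S.isBoundedUnder_wGap_iff (ne_of_apply_ne S.zlim hp)).mp ?_).1 hpl
  exact (isBoundedUnder_le_add hbdd_ip hbdd_il).mono_le
    (Eventually.of_forall fun N => S.wGap_le_add N i p l)

theorem sum_mul_z_eq_zero (N : ℕ) : ∑ p, m p * S.z N p = 0 := by
  have hrow : ∀ p, m p * S.z N p = ∑ q, m p * m q * Zq (S.delta N) (S.z N) p q := by
    intro p
    rw [S.eq_z N p, Finset.mul_sum, ← Finset.sum_erase univ (a := p) (by simp [Zq])]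
    exact Finset.sum_congr rfl fun q _ => by ring
  simp only [hrow]
  exact Finset.sum_sum_eq_zero_of_antisymm univ fun p q => by
    simp only [Zq, S.delta_symm N q p]; ring

theorem sum_mul_zlim_eq_zero : ∑ p, m p * S.zlim p = 0 := by
  have hlim : Tendsto (fun N => ∑ p, m p * ((S.eps N : ℂ) ^ 2 * S.z N p)) atTop
      (nhds (∑ p, m p * S.zlim p)) :=
    tendsto_finsetSum univ fun p _ => (S.tendsto_zlim p).const_mul (m p)
  refine tendsto_nhds_unique hlim (tendsto_const_nhds.congr fun N => ?_)
  simp only [mul_left_comm _ ((S.eps N : ℂ) ^ 2), ← Finset.mul_sum, S.sum_mul_z_eq_zero N,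
    mul_zero]

def swap : SingularSeq n m where
  z := S.w
  w := S.z
  delta := S.delta
  eps := S.eps
  eps_pos := S.eps_pos
  eps_lim := S.eps_lim
  delta_symm := S.delta_symm
  eq_z := S.eq_w
  eq_w := S.eq_z
  normalize N k l hkl := by rw [← S.normalize N k l hkl]; ring
  maxZ := S.maxW
  maxW := S.maxZ
  conv_z := S.conv_w
  conv_w := S.conv_z
  conv_Z := S.conv_W
  conv_W := S.conv_Z

end SingularSeq

namespace IsZWMatrices

variable {n : ℕ} {m : Fin n → ℂ} {S : SingularSeq n m} {A B : Matrix (Fin n) (Fin n) ℕ}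

theorem swap (h : IsZWMatrices S A B) : IsZWMatrices S.swap B A :=
  ⟨h.zeroOne_B, h.symm_B, h.zeroOne_A, h.symm_A, h.diag_B, h.off_B, h.diag_A, h.off_A⟩

theorem zlim_ne_zero_iff (h : IsZWMatrices S A B) (p : Fin n) : S.zlim p ≠ 0 ↔ A p p = 1 := by
  rw [h.diag_A, S.tendsto_zero_iff_zlim_eq_zero]

theorem zlim_eq_zero_iff (h : IsZWMatrices S A B) (p : Fin n) : S.zlim p = 0 ↔ A p p = 0 := by
  have := h.zlim_ne_zero_iff p
  rcases h.zeroOne_A p p with h0 | h1 <;> simp_all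

theorem Zlim_ne_zero_iff (h : IsZWMatrices S A B) {p q : Fin n} (hpq : p ≠ q) :
    S.Zlim p q ≠ 0 ↔ A p q = 1 := by
  rw [h.off_A p q hpq, S.tendsto_zero_iff_Zlim_eq_zero]

theorem Zlim_eq_zero_iff (h : IsZWMatrices S A B) {p q : Fin n} (hpq : p ≠ q) :
    S.Zlim p q = 0 ↔ A p q = 0 := by
  have := h.Zlim_ne_zero_iff hpq
  rcases h.zeroOne_A p q with h0 | h1 <;> simp_all

theorem zlim_eq_of_entries (h : IsZWMatrices S A B) {i p l : Fin n} (hl : A l l = 0)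
    (hi : A i i = 1) (hp : A p p = 1) (hip : A i p = 1) (hil : A i l = 1) (hpl : A p l = 0)
    (hne : i ≠ p) : S.zlim p = S.zlim i := by
  have hzl : S.zlim l = 0 := (h.zlim_eq_zero_iff l).mpr hl
  have hne_l : ∀ q, A q q = 1 → q ≠ l := by rintro q hq rfl; omega
  refine (S.zlim_eq_of_Zlim_eq_zero ((h.Zlim_ne_zero_iff (hne_l i hi)).mpr hil) ?_
    ((h.Zlim_eq_zero_iff (hne_l p hp)).mpr hpl) ?_ ((h.Zlim_ne_zero_iff hne).mpr hip)).symm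
  · rw [hzl]; exact (h.zlim_ne_zero_iff i).mpr hi
  · rw [hzl]; exact (h.zlim_ne_zero_iff p).mpr hp

theorem add_ne_zero_of_trace_eq_three (h : IsZWMatrices S A B)
    (hm : ∀ I : Finset (Fin n), I.Nonempty → ∑ k ∈ I, m k ≠ 0) (htr : A.trace = 3)
    {i j k l : Fin n} (hij : i ≠ j) (hik : i ≠ k) (hjk : j ≠ k)
    (hli : l ≠ i) (hlj : l ≠ j) (hlk : l ≠ k)
    (hAi : A i i = 1) (hAj : A j j = 1) (hAk : A k k = 1)
    (hAij : A i j = 1) (hAik : A i k = 1) (hAil : A i l = 1) :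
    A j l + A k l ≠ 0 := by
  intro hsum
  set T : Finset (Fin n) := {i, j, k}
  have hdiag : ∀ p ∉ T, S.zlim p = 0 := by
    refine fun p hp => (h.zlim_eq_zero_iff p).mpr
      (Finset.eq_zero_of_sum_eq_sum_univ (f := fun q => A q q) ?_ hp)
    rw [show ∑ p, A p p = 3 from htr]
    simp [T, hij, hik, hjk, hAi, hAj, hAk]
  have hl : S.zlim l = 0 := hdiag l (by simp [T, hli, hlj, hlk])
  have hzlim : ∀ p ∈ T, S.zlim p = S.zlim i := by
    have hll : A l l = 0 := (h.zlim_eq_zero_iff l).mp hl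
    intro p hp
    simp only [T, Finset.mem_insert, Finset.mem_singleton] at hp
    rcases hp with rfl | rfl | rfl
    · rfl
    · exact h.zlim_eq_of_entries hll hAi hAj hAij hAil (by omega) hij
    · exact h.zlim_eq_of_entries hll hAi hAk hAik hAil (by omega) hik
  have hsumT : (∑ p ∈ T, m p) * S.zlim i = 0 := by
    rw [Finset.sum_mul, ← S.sum_mul_zlim_eq_zero,
      ← Finset.sum_subset (subset_univ T) fun p _ hp => by rw [hdiag p hp, mul_zero]]
    exact Finset.sum_congr rfl fun p hp => by rw [hzlim p hp]
  exact mul_ne_zero (hm T ⟨i, by simp [T]⟩) ((h.zlim_ne_zero_iff i).mpr hAi) hsumT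

end IsZWMatrices

theorem rule_of_trace_three_matrices_general (n : ℕ) (m : Fin n → ℂ)
    (hm : ∀ I : Finset (Fin n), I.Nonempty → ∑ k ∈ I, m k ≠ 0)
    (S : SingularSeq n m) (A B : Matrix (Fin n) (Fin n) ℕ)
    (hAB : IsZWMatrices S A B) :
    (Matrix.trace A = 3 →
      ∀ i j k l : Fin n, i ≠ j → i ≠ k → j ≠ k → l ≠ i → l ≠ j → l ≠ k →
        A i i = 1 → A j j = 1 → A k k = 1 →
        A i j = 1 → A i k = 1 → A i l = 1 → A j l + A k l ≠ 0) ∧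
    (Matrix.trace B = 3 →
      ∀ i j k l : Fin n, i ≠ j → i ≠ k → j ≠ k → l ≠ i → l ≠ j → l ≠ k →
        B i i = 1 → B j j = 1 → B k k = 1 →
        B i j = 1 → B i k = 1 → B i l = 1 → B j l + B k l ≠ 0) :=
  ⟨fun htr _ _ _ _ => hAB.add_ne_zero_of_trace_eq_three hm htr,
    fun htr _ _ _ _ => hAB.swap.add_ne_zero_of_trace_eq_three hm htr⟩

theorem rule_of_trace_three_matrices (n : ℕ) (hn : 2 ≤ n) (m : Fin n → ℂ)
    (hm : ∀ I : Finset (Fin n), I.Nonempty → ∑ k ∈ I, m k ≠ 0)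
    (S : SingularSeq n m) (A B : Matrix (Fin n) (Fin n) ℕ)
    (hAB : IsZWMatrices S A B) :
    (Matrix.trace A = 3 →
      ∀ i j k l : Fin n, i ≠ j → i ≠ k → j ≠ k → l ≠ i → l ≠ j → l ≠ k →
        A i i = 1 → A j j = 1 → A k k = 1 →
        A i j = 1 → A i k = 1 → A i l = 1 → A j l + A k l ≠ 0) ∧
    (Matrix.trace B = 3 →
      ∀ i j k l : Fin n, i ≠ j → i ≠ k → j ≠ k → l ≠ i → l ≠ j → l ≠ k →
        B i i = 1 → B j j = 1 → B k k = 1 →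
        B i j = 1 → B i k = 1 → B i l = 1 → B j l + B k l ≠ 0) :=
  rule_of_trace_three_matrices_general n m hm S A B hAB
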